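/- arXiv:1202.5822 — 2 statements merged into one kernel-verified Lean document; each statement's English description precedes it below -/
import Mathlib

section
/- Let $k \geq 1$ and $\gamma > 0$ with $e^{2\gamma(k+1)} \geq 2k^2$. Then for all integers $1 \leq q \leq k$, the coefficient $C_q = \frac{q^2}{q^2 - e^{2\gamma(k+1)}} \prod_{j \in \{1,\ldots,k\}\setminus\{q\}} \frac{q^2}{q^2 - j^2}$ satisfies $|C_q| \leq \sqrt{2}\, k^{3/2} e^{2k(1 + \log(\eta)/2 - \gamma)}$, where $\eta = \max_{\lambda \in [0,1)} \frac{\lambda^2}{(1+\lambda)^{1+\lambda}(1-\lambda)^{1-\lambda}}$. -/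
/-! Writing `|q² - j²| = |q - j| (q + j)`, the product over `j ≠ q` collapses into factorials,
`|C_q| = q² / (E - q²) · 2 q^{2k} / ((k-q)! (k+q)!)` with `E = e^{2γ(k+1)}`, and `E ≥ 2k²`
gives `q² / (E - q²) ≤ 2 q² / E`. With `λ = q / k` one has the identity
`q^{2k} = etaRatio(λ)^k (k-q)^{k-q} (k+q)^{k+q}`, and `etaRatio(λ) ≤ η`. Stirling's bound for
`(k+q)!` and `nⁿ ≤ n! eⁿ` for `(k-q)!` bound `(k-q)^{k-q} (k+q)^{k+q}` by
`e^{2k} (k-q)! (k+q)! / √(2π(k+q))`, and the leftover factor satisfies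
`4q² ≤ √2 k^{3/2} √(2π(k+q))`. -/

open Finset Real
open scoped Nat

theorem prod_Ico_one_sub_eq_factorial (q : ℕ) : ∏ j ∈ Ico 1 q, (q - j) = (q - 1)! := by
  rcases q with _ | q
  · simp
  · rw [prod_Ico_reflect (fun j => j) 1 (Nat.le_succ _)]
    simp [prod_Ico_id_eq_factorial q]

theorem prod_Ioc_sub_eq_factorial (q : ℕ) {k : ℕ} (h : q ≤ k) :
    ∏ j ∈ Ioc q k, (j - q) = (k - q)! := by
  induction k, h using Nat.le_induction with
  | base => simp
  | succ k hqk ih =>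
    rw [prod_Ioc_succ_top (by omega), ih, Nat.sub_add_comm hqk, Nat.factorial_succ]
    ring

theorem factorial_mul_prod_Icc_add (q k : ℕ) : q ! * ∏ j ∈ Icc 1 k, (q + j) = (q + k)! := by
  induction k with
  | zero => simp
  | succ k ih =>
    rw [prod_Icc_succ_top (by omega), ← mul_assoc, ih, ← add_assoc, Nat.factorial_succ]
    ring

theorem prod_Icc_erase_abs_sub {q k : ℕ} (hqk : q ≤ k) :
    ∏ j ∈ (Icc 1 k).erase q, |(q : ℝ) - j| = (q - 1)! * (k - q)! := by
  have hsplit : (Icc 1 k).erase q = Ico 1 q ∪ Ioc q k := by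
    ext j; simp only [mem_erase, mem_Icc, mem_union, mem_Ico, mem_Ioc]; omega
  have hdisj : Disjoint (Ico 1 q) (Ioc q k) :=
    disjoint_left.2 fun j hj hj' => by simp only [mem_Ico, mem_Ioc] at hj hj'; omega
  rw [hsplit, prod_union hdisj, ← prod_Ico_one_sub_eq_factorial,
    ← prod_Ioc_sub_eq_factorial q hqk, Nat.cast_prod, Nat.cast_prod]
  congr 1
  · refine prod_congr rfl fun j hj => ?_
    rw [mem_Ico] at hj
    rw [Nat.cast_sub hj.2.le, abs_of_nonneg (sub_nonneg.2 (by exact_mod_cast hj.2.le))]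
  · refine prod_congr rfl fun j hj => ?_
    rw [mem_Ioc] at hj
    rw [Nat.cast_sub hj.1.le, abs_sub_comm,
      abs_of_nonneg (sub_nonneg.2 (by exact_mod_cast hj.1.le))]

theorem two_mul_sq_mul_prod_Icc_erase_abs_sq_sub {q k : ℕ} (hq : 1 ≤ q) (hqk : q ≤ k) :
    2 * (q : ℝ) ^ 2 * ∏ j ∈ (Icc 1 k).erase q, |(q : ℝ) ^ 2 - j ^ 2| =
      (k - q)! * (k + q)! := by
  have hfac : (q ! : ℝ) = q * (q - 1)! := by
    rw [← Nat.mul_factorial_pred (by omega : q ≠ 0)]; push_cast; ring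
  have hIcc : 2 * (q : ℝ) * ∏ j ∈ (Icc 1 k).erase q, ((q : ℝ) + j) =
      ∏ j ∈ Icc 1 k, ((q : ℝ) + j) := by
    rw [← mul_prod_erase _ _ (mem_Icc.2 ⟨hq, hqk⟩)]; ring
  have hfull : (q ! : ℝ) * ∏ j ∈ Icc 1 k, ((q : ℝ) + j) = (k + q)! := by
    rw [add_comm k]; exact_mod_cast factorial_mul_prod_Icc_add q k
  have habs (j : ℕ) : |(q : ℝ) + j| = q + j := abs_of_nonneg (by positivity)
  simp_rw [sq_sub_sq, abs_mul, habs]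
  rw [prod_mul_distrib, prod_Icc_erase_abs_sub hqk, ← hfull, hfac, ← hIcc]
  ring

theorem abs_prod_Icc_erase_div_sq_sub {q k : ℕ} (hq : 1 ≤ q) (hqk : q ≤ k) :
    |∏ j ∈ (Icc 1 k).erase q, (q : ℝ) ^ 2 / ((q : ℝ) ^ 2 - (j : ℝ) ^ 2)| =
      2 * (q : ℝ) ^ (2 * k) / ((k - q)! * (k + q)!) := by
  have hq0 : (0 : ℝ) < q := by exact_mod_cast hq
  have hprod := two_mul_sq_mul_prod_Icc_erase_abs_sq_sub hq hqk
  obtain ⟨k, rfl⟩ := Nat.exists_eq_add_of_le' (hq.trans hqk)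
  rw [abs_prod]
  simp_rw [abs_div, abs_of_pos (pow_pos hq0 2)]
  rw [prod_div_distrib, prod_const, card_erase_of_mem (mem_Icc.2 ⟨hq, hqk⟩), Nat.card_Icc,
    ← hprod, show 2 * (q : ℝ) ^ (2 * (k + 1)) = 2 * q ^ 2 * (q ^ 2) ^ k by ring,
    mul_div_mul_left _ _ (by positivity)]
  simp

theorem abs_sq_div_sq_sub_mul_prod_le {q k : ℕ} (hq : 1 ≤ q) (hqk : q ≤ k) {E : ℝ}
    (hE : 2 * (k : ℝ) ^ 2 ≤ E) :
    |(q : ℝ) ^ 2 / ((q : ℝ) ^ 2 - E) *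
        ∏ j ∈ (Icc 1 k).erase q, (q : ℝ) ^ 2 / ((q : ℝ) ^ 2 - (j : ℝ) ^ 2)| ≤
      4 * (q : ℝ) ^ 2 * q ^ (2 * k) / ((k - q)! * (k + q)!) / E := by
  have hq0 : (0 : ℝ) < q := by exact_mod_cast hq
  have hqk' : (q : ℝ) ≤ k := by exact_mod_cast hqk
  have hqE : 2 * (q : ℝ) ^ 2 ≤ E := by nlinarith
  have hE0 : 0 < E := by nlinarith
  rw [abs_mul, abs_prod_Icc_erase_div_sq_sub hq hqk, abs_div, abs_of_pos (by positivity),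
    abs_of_neg (by linarith), neg_sub]
  calc (q : ℝ) ^ 2 / (E - q ^ 2) * (2 * q ^ (2 * k) / ((k - q)! * (k + q)!))
      ≤ 2 * q ^ 2 / E * (2 * q ^ (2 * k) / ((k - q)! * (k + q)!)) := by
        gcongr ?_ * _
        rw [div_le_div_iff₀ (by linarith) hE0]
        nlinarith
    _ = 4 * q ^ 2 * q ^ (2 * k) / ((k - q)! * (k + q)!) / E := by ring

noncomputable def etaRatio (x : ℝ) : ℝ := x ^ 2 / ((1 + x) ^ (1 + x) * (1 - x) ^ (1 - x))

theorem exp_neg_one_le_rpow_self {x : ℝ} (hx : 0 ≤ x) : exp (-1) ≤ x ^ x := by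
  rcases hx.eq_or_lt with rfl | hx
  · simp
  rw [rpow_def_of_pos hx, exp_le_exp]
  have := one_sub_inv_le_log_of_pos hx
  have : x * (1 - x⁻¹) = x - 1 := by field_simp
  nlinarith

theorem exp_neg_one_le_etaRatio_denom {x : ℝ} (h0 : 0 ≤ x) (h1 : x ≤ 1) :
    exp (-1) ≤ (1 + x) ^ (1 + x) * (1 - x) ^ (1 - x) := by
  have h₁ : 1 ≤ (1 + x) ^ (1 + x) := one_le_rpow (by linarith) (by linarith)
  have h₂ := exp_neg_one_le_rpow_self (x := 1 - x) (by linarith)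
  nlinarith [exp_pos (-1)]

theorem etaRatio_nonneg {x : ℝ} (h0 : 0 ≤ x) (h1 : x ≤ 1) : 0 ≤ etaRatio x :=
  div_nonneg (sq_nonneg x) ((exp_pos _).le.trans (exp_neg_one_le_etaRatio_denom h0 h1))

theorem etaRatio_le_exp_one {x : ℝ} (h0 : 0 ≤ x) (h1 : x ≤ 1) : etaRatio x ≤ exp 1 := by
  have hD := exp_neg_one_le_etaRatio_denom h0 h1
  calc etaRatio x ≤ 1 / exp (-1) :=
        div_le_div₀ zero_le_one (by nlinarith) (exp_pos _) hD
    _ = exp 1 := by rw [exp_neg, one_div, inv_inv]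

theorem bddAbove_etaRatio_image : BddAbove (etaRatio '' Set.Ico 0 1) :=
  ⟨exp 1, Set.forall_mem_image.2 fun _ hx => etaRatio_le_exp_one hx.1 hx.2.le⟩

theorem etaRatio_one : etaRatio 1 = 1 / 4 := by norm_num [etaRatio]

theorem quarter_le_etaRatio_three_quarters : 1 / 4 ≤ etaRatio (3 / 4) := by
  have hpos := exp_neg_one_le_etaRatio_denom (x := 3 / 4) (by norm_num) (by norm_num)
  set D := (1 + 3 / 4 : ℝ) ^ ((1 : ℝ) + 3 / 4) * (1 - 3 / 4) ^ ((1 : ℝ) - 3 / 4) with hD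
  have hD4 : D ^ 4 = (7 / 4) ^ 7 * (1 / 4) := by
    rw [hD, mul_pow, ← rpow_natCast _ 4, ← rpow_natCast (_ ^ _) 4, ← rpow_mul (by norm_num),
      ← rpow_mul (by norm_num)]
    norm_num
  have hD_le : D ≤ 9 / 4 :=
    le_of_pow_le_pow_left₀ four_ne_zero (by norm_num) (by rw [hD4]; norm_num)
  rw [etaRatio, le_div_iff₀ ((exp_pos _).trans_le hpos)]
  linarith

theorem quarter_le_sSup_etaRatio : 1 / 4 ≤ sSup (etaRatio '' Set.Ico 0 1) :=
  quarter_le_etaRatio_three_quarters.trans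
    (le_csSup bddAbove_etaRatio_image ⟨3 / 4, ⟨by norm_num, by norm_num⟩, rfl⟩)

-- At `x = 1` Lean's `0 ^ 0 = 1` makes `etaRatio 1 = 1 / 4` the limit value, which covers `q = k`.
theorem etaRatio_le_sSup {x : ℝ} (h0 : 0 ≤ x) (h1 : x ≤ 1) :
    etaRatio x ≤ sSup (etaRatio '' Set.Ico 0 1) := by
  rcases h1.lt_or_eq with h1 | rfl
  · exact le_csSup bddAbove_etaRatio_image ⟨x, ⟨h0, h1⟩, rfl⟩
  · rw [etaRatio_one]
    exact quarter_le_sSup_etaRatio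

theorem etaRatio_div_rpow_mul {a b : ℝ} (ha : 0 < a) (hb : 0 ≤ b) (hba : b ≤ a) :
    etaRatio (b / a) ^ a * ((a - b) ^ (a - b) * (a + b) ^ (a + b)) = b ^ (2 * a) := by
  set l := b / a
  have hl0 : 0 ≤ l := div_nonneg hb ha.le
  have hl1 : l ≤ 1 := (div_le_one ha).2 hba
  have hb' : b = l * a := (div_mul_cancel₀ b ha.ne').symm
  have hP : 0 < ((1 + l) ^ (1 + l)) ^ a := rpow_pos_of_pos (rpow_pos_of_pos (by linarith) _) _
  have hM : 0 < ((1 - l) ^ (1 - l)) ^ a :=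
    rpow_pos_of_pos ((exp_pos _).trans_le (exp_neg_one_le_rpow_self (by linarith))) _
  have hplus : (a + b) ^ (a + b) = ((1 + l) ^ (1 + l)) ^ a * a ^ ((1 + l) * a) := by
    rw [← rpow_mul (by linarith), ← mul_rpow (by linarith) ha.le, hb']; ring_nf
  have hminus : (a - b) ^ (a - b) = ((1 - l) ^ (1 - l)) ^ a * a ^ ((1 - l) * a) := by
    rw [← rpow_mul (by linarith), ← mul_rpow (by linarith) ha.le, hb']; ring_nf
  have hpow : b ^ (2 * a) = (l ^ 2) ^ a * (a ^ ((1 + l) * a) * a ^ ((1 - l) * a)) := by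
    rw [← rpow_add ha, hb', mul_rpow hl0 ha.le, ← rpow_natCast, ← rpow_mul hl0]; ring_nf
  rw [etaRatio, div_rpow (sq_nonneg l) (by positivity), mul_rpow (by positivity) (by positivity),
    hplus, hminus, hpow]
  field_simp

theorem pow_two_mul_le_of_etaRatio_le {q k : ℕ} (hk : 0 < k) (hqk : q ≤ k) {η : ℝ}
    (hη : etaRatio (q / k) ≤ η) :
    (q : ℝ) ^ (2 * k) ≤
      η ^ k * (((k - q : ℕ) : ℝ) ^ (k - q) * ((k + q : ℕ) : ℝ) ^ (k + q)) := by
  have h := etaRatio_div_rpow_mul (a := k) (b := q) (by exact_mod_cast hk) q.cast_nonneg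
    (by exact_mod_cast hqk)
  rw [← Nat.cast_sub hqk, ← Nat.cast_add,
    show (2 : ℝ) * k = ((2 * k : ℕ) : ℝ) by push_cast; ring] at h
  simp only [rpow_natCast] at h
  rw [← h]
  have hk' : (0 : ℝ) < k := by exact_mod_cast hk
  gcongr
  exact etaRatio_nonneg (by positivity) ((div_le_one hk').2 (by exact_mod_cast hqk))

theorem pow_mul_pow_mul_sqrt_le_factorial_mul (m p : ℕ) :
    (m : ℝ) ^ m * p ^ p * √(2 * π * p) ≤ m ! * p ! * exp (m + p) := by
  have hm : (m : ℝ) ^ m ≤ m ! * exp m := by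
    rw [← div_le_iff₀' (by positivity)]; exact pow_div_factorial_le_exp _ m.cast_nonneg m
  have hp : √(2 * π * p) * p ^ p ≤ p ! * exp p := by
    have := Stirling.le_factorial_stirling p
    rwa [div_pow, ← exp_nat_mul, mul_one, mul_div_assoc', div_le_iff₀ (exp_pos _)] at this
  rw [exp_add, mul_assoc, mul_comm ((p : ℝ) ^ p), mul_mul_mul_comm]
  exact mul_le_mul hm hp (by positivity) (by positivity)

theorem four_mul_sq_le_sqrt_mul_rpow_mul_sqrt {q k : ℝ} (hq : 0 ≤ q) (hqk : q ≤ k) :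
    4 * q ^ 2 ≤ √2 * k ^ ((3 : ℝ) / 2) * √(2 * π * (k + q)) := by
  have hk : 0 ≤ k := hq.trans hqk
  have hk32 : k ^ ((3 : ℝ) / 2) = √(k ^ 3) := by
    rw [sqrt_eq_rpow, ← rpow_natCast, ← rpow_mul hk]; norm_num
  rw [hk32, ← sqrt_mul zero_le_two, ← sqrt_mul (by positivity),
    le_sqrt (by positivity) (by positivity)]
  have hq4 : q ^ 3 * (2 * q) ≤ k ^ 3 * (k + q) :=
    mul_le_mul (pow_le_pow_left₀ hq hqk 3) (by linarith) (by positivity) (by positivity)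
  nlinarith [pi_gt_three, pow_nonneg hq 4]

theorem four_mul_sq_mul_pow_le {q k : ℕ} (hk : 0 < k) (hqk : q ≤ k) {η : ℝ}
    (hη : etaRatio (q / k) ≤ η) :
    4 * (q : ℝ) ^ 2 * q ^ (2 * k) ≤
      √2 * (k : ℝ) ^ ((3 : ℝ) / 2) * exp (2 * k) * η ^ k * ((k - q)! * (k + q)!) := by
  have hη0 : 0 ≤ η := (etaRatio_nonneg (by positivity)
    ((div_le_one (by exact_mod_cast hk)).2 (by exact_mod_cast hqk))).trans hη
  have hpow := pow_two_mul_le_of_etaRatio_le hk hqk hη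
  have hfac := pow_mul_pow_mul_sqrt_le_factorial_mul (k - q) (k + q)
  have hsq := four_mul_sq_le_sqrt_mul_rpow_mul_sqrt (q := q) (k := k) q.cast_nonneg
    (by exact_mod_cast hqk)
  have hsum : ((k - q : ℕ) : ℝ) + ((k + q : ℕ) : ℝ) = 2 * k := by
    push_cast [Nat.cast_sub hqk]; ring
  rw [hsum] at hfac
  push_cast at hpow hfac hsq
  set S := √(2 * π * (k + q))
  set F : ℝ := (k - q)! * (k + q)!
  have hS : 0 < S := sqrt_pos.2 (by positivity)
  refine le_of_mul_le_mul_right ?_ hS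
  calc 4 * (q : ℝ) ^ 2 * q ^ (2 * k) * S
      ≤ 4 * q ^ 2 * (η ^ k * (((k - q : ℕ) : ℝ) ^ (k - q) * (k + q) ^ (k + q))) * S := by
        gcongr
    _ = 4 * q ^ 2 * η ^ k * (((k - q : ℕ) : ℝ) ^ (k - q) * (k + q) ^ (k + q) * S) := by ring
    _ ≤ 4 * q ^ 2 * η ^ k * (F * exp (2 * k)) := by gcongr
    _ ≤ √2 * k ^ ((3 : ℝ) / 2) * S * η ^ k * (F * exp (2 * k)) := by gcongr
    _ = √2 * k ^ ((3 : ℝ) / 2) * exp (2 * k) * η ^ k * F * S := by ring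

theorem exp_two_mul_one_add_half_log_sub {η : ℝ} (hη : 0 < η) (k : ℕ) (γ : ℝ) :
    exp (2 * k * (1 + log η / 2 - γ)) = exp (2 * k) * η ^ k / exp (2 * γ * k) := by
  have : η ^ k = exp (k * log η) := by rw [exp_nat_mul, exp_log hη]
  rw [this, ← exp_add, ← exp_sub]
  ring_nf

/-- Lemma 3 of Childs–Wiebe: under `e^{2γ(k+1)} ≥ 2k²`, for `1 ≤ q ≤ k`,
`|C_q| ≤ √2 k^{3/2} e^{2k(1 + log(η)/2 - γ)}` where
`η = sup_{λ ∈ [0,1)} λ²/((1+λ)^{1+λ}(1-λ)^{1-λ})`. -/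
theorem stmt_6 (k q : ℕ) (hk : 1 ≤ k) (hq1 : 1 ≤ q) (hqk : q ≤ k) (γ : ℝ) (hγ : 0 < γ)
    (hγ2 : Real.exp (2 * γ * (k + 1)) ≥ 2 * (k : ℝ) ^ 2)
    (η : ℝ)
    (hη : η = sSup ((fun lam : ℝ =>
        lam ^ 2 / ((1 + lam) ^ (1 + lam) * (1 - lam) ^ (1 - lam))) '' Set.Ico (0 : ℝ) 1))
    (Cq : ℝ)
    (hCq : Cq = ((q : ℝ) ^ 2 / ((q : ℝ) ^ 2 - Real.exp (2 * γ * (k + 1)))) *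
        ∏ j ∈ (Finset.Icc 1 k).erase q, ((q : ℝ) ^ 2) / ((q : ℝ) ^ 2 - (j : ℝ) ^ 2)) :
    |Cq| ≤ Real.sqrt 2 * (k : ℝ) ^ ((3 : ℝ) / 2) *
        Real.exp (2 * k * (1 + Real.log η / 2 - γ)) := by
  replace hη : η = sSup (etaRatio '' Set.Ico 0 1) := hη
  have hk0 : (0 : ℝ) < k := by exact_mod_cast hk
  have hηq : etaRatio (q / k) ≤ η :=
    hη ▸ etaRatio_le_sSup (by positivity) ((div_le_one hk0).2 (by exact_mod_cast hqk))
  have hη0 : 0 < η := hη ▸ (by norm_num : (0 : ℝ) < 1 / 4).trans_le quarter_le_sSup_etaRatio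
  have hE : exp (2 * γ * k) ≤ exp (2 * γ * (k + 1)) := exp_le_exp.2 (by nlinarith)
  rw [hCq, exp_two_mul_one_add_half_log_sub hη0, ← mul_div_assoc, ← mul_assoc]
  calc _ ≤ 4 * (q : ℝ) ^ 2 * q ^ (2 * k) / ((k - q)! * (k + q)!) / exp (2 * γ * (k + 1)) :=
        abs_sq_div_sq_sub_mul_prod_le hq1 hqk hγ2
    _ ≤ √2 * k ^ ((3 : ℝ) / 2) * exp (2 * k) * η ^ k / exp (2 * γ * (k + 1)) := by
        gcongr
        exact (div_le_iff₀ (by positivity)).2 (four_mul_sq_mul_pow_le (by omega) hqk hηq)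
    _ ≤ √2 * k ^ ((3 : ℝ) / 2) * exp (2 * k) * η ^ k / exp (2 * γ * k) := by gcongr
end

section
/- Let $H_1, \ldots, H_M$ be Hermitian $N \times N$ matrices with $\|H_j\| \leq h$, let $a_1, \ldots, a_M \in \mathbb{R}$, and let $t \geq 0$. Then the tail of the Taylor series (in $t$) of $\prod_{j=1}^M e^{-i a_j H_j t}$ beyond order $\ell$ has operator norm at most $\frac{(\sum_{j=1}^M |a_j| h t)^{\ell+1}}{(\ell+1)!} \exp\left(\sum_{j=1}^M |a_j| h t\right)$. -/
/-!
Write `f s = ∏ⱼ exp (s • Bⱼ) = ∑ₙ sⁿ cₙ` with `Bⱼ = -i aⱼ Hⱼ`. Multiplying out the exponential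
series gives `‖cₙ‖ ≤ cⁿ / n!` with `c = ∑ⱼ ‖Bⱼ‖ ≤ ∑ⱼ |aⱼ| h`, and the Taylor coefficients of `f`
at `0` are the `cₙ`. The Taylor remainder is therefore the tail `∑_{n > ℓ} tⁿ cₙ`, which is
dominated by the tail of the exponential series of `c t`; `(ℓ+1)! i! ≤ (ℓ+1+i)!` bounds that
tail by `(c t)^(ℓ+1) / (ℓ+1)! · exp (c t)`.
-/

open NormedSpace Finset
open scoped Nat

theorem sum_antidiagonal_pow_div_factorial_mul (x y : ℝ) (n : ℕ) :
    ∑ kl ∈ antidiagonal n, x ^ kl.1 / kl.1 ! * (y ^ kl.2 / kl.2 !) = (x + y) ^ n / n ! := by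
  rw [Nat.sum_antidiagonal_eq_sum_range_succ_mk, add_pow, sum_div]
  refine sum_congr rfl fun k hk => ?_
  have hkn : k ≤ n := Nat.lt_succ_iff.mp (mem_range.mp hk)
  have hfac : (n.choose k : ℝ) * k ! * (n - k)! = n ! := by
    exact_mod_cast Nat.choose_mul_factorial_mul_factorial hkn
  field_simp
  rw [← hfac]
  ring

theorem tsum_pow_add_div_factorial_le {x : ℝ} (hx : 0 ≤ x) (m : ℕ) :
    ∑' i, x ^ (i + m) / (i + m)! ≤ x ^ m / m ! * Real.exp x := by
  rw [Real.exp_eq_exp_ℝ, exp_eq_tsum_div, ← tsum_mul_left]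
  have hterm (i : ℕ) : x ^ (i + m) / (i + m)! ≤ x ^ m / m ! * (x ^ i / i !) := by
    rw [div_mul_div_comm, ← pow_add, add_comm m i]
    gcongr
    exact_mod_cast Nat.le_of_dvd (i + m).factorial_pos
      (by simpa [mul_comm] using Nat.factorial_mul_factorial_dvd_factorial_add i m)
  refine Summable.tsum_le_tsum hterm ?_ ((Real.summable_pow_div_factorial x).mul_left _)
  exact (summable_nat_add_iff m).mpr (Real.summable_pow_div_factorial x)

section PowerSeries

variable {E : Type*} [NormedAddCommGroup E] [NormedSpace ℝ E] {g : ℕ → E} {c : ℝ}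

theorem norm_pow_smul_le_of_norm_le_pow_div_factorial (hg : ∀ n, ‖g n‖ ≤ c ^ n / n !)
    (s : ℝ) (n : ℕ) : ‖s ^ n • g n‖ ≤ (|s| * c) ^ n / n ! := by
  rw [norm_smul, norm_pow, Real.norm_eq_abs, mul_pow, mul_div_assoc]
  gcongr
  exact hg n

theorem summable_norm_pow_smul_of_norm_le_pow_div_factorial (hg : ∀ n, ‖g n‖ ≤ c ^ n / n !)
    (s : ℝ) : Summable fun n => ‖s ^ n • g n‖ :=
  .of_nonneg_of_le (fun _ => norm_nonneg _)
    (norm_pow_smul_le_of_norm_le_pow_div_factorial hg s)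
    (Real.summable_pow_div_factorial _)

variable {f : ℝ → E}

theorem hasFPowerSeriesOnBall_mkPiRing_of_hasSum (hg : ∀ n, ‖g n‖ ≤ c ^ n / n !)
    (hf : ∀ s, HasSum (fun n => s ^ n • g n) (f s)) :
    HasFPowerSeriesOnBall f (fun n => ContinuousMultilinearMap.mkPiRing ℝ (Fin n) (g n)) 0 ⊤ where
  r_le := by
    refine (FormalMultilinearSeries.radius_eq_top_of_summable_norm _ fun r => ?_).ge
    simpa [ContinuousMultilinearMap.norm_mkPiRing, norm_smul, mul_comm] using
      summable_norm_pow_smul_of_norm_le_pow_div_factorial hg r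
  r_pos := ENNReal.zero_lt_top
  hasSum {y} _ := by simpa [ContinuousMultilinearMap.mkPiRing_apply] using hf y

variable [CompleteSpace E]

theorem iteratedDeriv_zero_eq_factorial_smul_of_hasSum (hg : ∀ n, ‖g n‖ ≤ c ^ n / n !)
    (hf : ∀ s, HasSum (fun n => s ^ n • g n) (f s)) (n : ℕ) :
    iteratedDeriv n f 0 = n ! • g n := by
  rw [iteratedDeriv_eq_iteratedFDeriv,
    ← (hasFPowerSeriesOnBall_mkPiRing_of_hasSum hg hf).factorial_smul 1 n]
  simp [ContinuousMultilinearMap.mkPiRing_apply]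

theorem sub_taylor_eq_tsum_of_hasSum (hg : ∀ n, ‖g n‖ ≤ c ^ n / n !)
    (hf : ∀ s, HasSum (fun n => s ^ n • g n) (f s)) (t : ℝ) (m : ℕ) :
    f t - ∑ p ∈ range m, (t ^ p / p !) • iteratedDeriv p f 0 = ∑' i, t ^ (i + m) • g (i + m) := by
  have hterm (p : ℕ) : (t ^ p / p !) • iteratedDeriv p f 0 = t ^ p • g p := by
    rw [iteratedDeriv_zero_eq_factorial_smul_of_hasSum hg hf, ← Nat.cast_smul_eq_nsmul ℝ,
      smul_smul, div_mul_cancel₀ _ (by positivity)]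
  simp only [hterm]
  rw [← (hf t).tsum_eq, ← (hf t).summable.sum_add_tsum_nat_add m, add_sub_cancel_left]

theorem norm_sub_taylor_le_of_hasSum (hg : ∀ n, ‖g n‖ ≤ c ^ n / n !)
    (hf : ∀ s, HasSum (fun n => s ^ n • g n) (f s)) {t : ℝ} (ht : 0 ≤ t) (m : ℕ) :
    ‖f t - ∑ p ∈ range m, (t ^ p / p !) • iteratedDeriv p f 0‖
      ≤ (c * t) ^ m / m ! * Real.exp (c * t) := by
  have hc : 0 ≤ c := by simpa using (norm_nonneg _).trans (hg 1)
  have hnorm : Summable fun i => ‖t ^ (i + m) • g (i + m)‖ :=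
    (summable_nat_add_iff m).mpr (summable_norm_pow_smul_of_norm_le_pow_div_factorial hg t)
  rw [sub_taylor_eq_tsum_of_hasSum hg hf]
  calc ‖∑' i, t ^ (i + m) • g (i + m)‖
      ≤ ∑' i, ‖t ^ (i + m) • g (i + m)‖ := norm_tsum_le_tsum_norm hnorm
    _ ≤ ∑' i, (c * t) ^ (i + m) / (i + m)! := by
        refine Summable.tsum_le_tsum (fun i => ?_) hnorm
          ((summable_nat_add_iff (f := fun n => (c * t) ^ n / n !) m).mpr
            (Real.summable_pow_div_factorial _))
        have := norm_pow_smul_le_of_norm_le_pow_div_factorial hg t (i + m)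
        rwa [abs_of_nonneg ht, mul_comm] at this
    _ ≤ (c * t) ^ m / m ! * Real.exp (c * t) := tsum_pow_add_div_factorial_le (mul_nonneg hc ht) m

end PowerSeries

section ProdExp

variable {A : Type*} [NormedRing A] [NormedAlgebra ℝ A]

/-- The `n`-th Taylor coefficient at `0` of `s ↦ ∏_{B ∈ L} exp (s • B)`. -/
noncomputable def prodExpCoeff : List A → ℕ → A
  | [], n => if n = 0 then 1 else 0
  | B :: L, n => ∑ kl ∈ antidiagonal n, ((kl.1 ! : ℝ)⁻¹ • B ^ kl.1) * prodExpCoeff L kl.2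

-- Not `NormOneClass A`: that fails for the operators on the zero space.
variable (h1 : ‖(1 : A)‖ ≤ 1)
include h1

theorem norm_inv_factorial_smul_pow_le (B : A) (k : ℕ) :
    ‖(k ! : ℝ)⁻¹ • B ^ k‖ ≤ ‖B‖ ^ k / k ! := by
  rw [norm_smul, norm_inv, Real.norm_natCast, inv_mul_eq_div]
  gcongr
  rcases k.eq_zero_or_pos with rfl | hk
  · simpa using h1
  · exact norm_pow_le' B hk

theorem norm_prodExpCoeff_le (L : List A) (n : ℕ) :
    ‖prodExpCoeff L n‖ ≤ (L.map norm).sum ^ n / n ! := by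
  induction L generalizing n with
  | nil => rcases eq_or_ne n 0 with rfl | hn <;> simp [prodExpCoeff, *]
  | cons B L ih =>
    simp only [prodExpCoeff, List.map_cons, List.sum_cons,
      ← sum_antidiagonal_pow_div_factorial_mul]
    refine (norm_sum_le _ _).trans (sum_le_sum fun kl _ => (norm_mul_le _ _).trans ?_)
    exact mul_le_mul (norm_inv_factorial_smul_pow_le h1 B kl.1) (ih kl.2) (norm_nonneg _)
      (by positivity)

variable [CompleteSpace A]

theorem hasSum_prodExpCoeff (L : List A) (s : ℝ) :
    HasSum (fun n => s ^ n • prodExpCoeff L n) (L.map fun B => exp (s • B)).prod := by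
  induction L with
  | nil =>
    rw [List.map_nil, List.prod_nil]
    convert hasSum_ite_eq 0 (1 : A) using 2 with n
    cases n <;> simp [prodExpCoeff]
  | cons B L ih =>
    have hB : HasSum (fun n => s ^ n • ((n ! : ℝ)⁻¹ • B ^ n)) (exp (s • B)) := by
      simpa only [smul_pow, smul_comm ((_ : ℕ)! : ℝ)⁻¹] using
        exp_series_hasSum_exp' (𝕂 := ℝ) (s • B)
    have hcauchy := tsum_mul_tsum_eq_tsum_sum_antidiagonal_of_summable_norm
      (summable_norm_pow_smul_of_norm_le_pow_div_factorial (norm_inv_factorial_smul_pow_le h1 B) s)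
      (summable_norm_pow_smul_of_norm_le_pow_div_factorial (norm_prodExpCoeff_le h1 L) s)
    have hterm (n : ℕ) : ∑ kl ∈ antidiagonal n, (s ^ kl.1 • ((kl.1 ! : ℝ)⁻¹ • B ^ kl.1)) *
        (s ^ kl.2 • prodExpCoeff L kl.2) = s ^ n • prodExpCoeff (B :: L) n := by
      rw [prodExpCoeff, smul_sum]
      refine sum_congr rfl fun kl hkl => ?_
      rw [smul_mul_smul_comm, ← pow_add, mem_antidiagonal.mp hkl]
    rw [hB.tsum_eq, ih.tsum_eq] at hcauchy
    simp only [hterm] at hcauchy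
    rw [List.map_cons, List.prod_cons, hcauchy]
    exact (summable_norm_pow_smul_of_norm_le_pow_div_factorial
      (norm_prodExpCoeff_le h1 (B :: L)) s).of_norm.hasSum

theorem norm_prod_exp_sub_taylor_le (L : List A) (f : ℝ → A)
    (hf : f = fun s => (L.map fun B => exp (s • B)).prod) {t : ℝ} (ht : 0 ≤ t) (m : ℕ) :
    ‖f t - ∑ p ∈ range m, (t ^ p / p !) • iteratedDeriv p f 0‖
      ≤ ((L.map norm).sum * t) ^ m / m ! * Real.exp ((L.map norm).sum * t) := by
  subst hf
  exact norm_sub_taylor_le_of_hasSum (norm_prodExpCoeff_le h1 L) (hasSum_prodExpCoeff h1 L) ht m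

end ProdExp

theorem stmt_11_general (N M : ℕ)
    (H : Fin M → (EuclideanSpace ℂ (Fin N) →L[ℂ] EuclideanSpace ℂ (Fin N)))
    (h : ℝ) (hHh : ∀ j, ‖H j‖ ≤ h)
    (a : Fin M → ℝ) (t : ℝ) (ht : 0 ≤ t) (ℓ : ℕ)
    (f : ℝ → (EuclideanSpace ℂ (Fin N) →L[ℂ] EuclideanSpace ℂ (Fin N)))
    (hf : f = fun s : ℝ =>
      (List.ofFn fun j : Fin M =>
        NormedSpace.exp ((-(Complex.I) * (a j : ℂ) * ((s : ℝ) : ℂ)) • H j)).prod) :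
    ‖f t - ∑ p ∈ Finset.range (ℓ + 1), (t ^ p / (p.factorial : ℝ)) • iteratedDeriv p f 0‖
      ≤ (∑ j, |a j| * h * t) ^ (ℓ + 1) / ((ℓ + 1).factorial : ℝ) *
          Real.exp (∑ j, |a j| * h * t) := by
  set L := List.ofFn fun j => (-Complex.I * a j) • H j
  have hfL : f = fun s : ℝ => (L.map fun B => exp (s • B)).prod := by
    rw [hf]
    funext s
    simp only [L, List.map_ofFn, Function.comp_def, ← smul_assoc, Complex.real_smul,
      mul_comm (s : ℂ)]
  have hc : 0 ≤ (L.map norm).sum * t :=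
    mul_nonneg (List.sum_nonneg (by simp)) ht
  have hct : (L.map norm).sum * t ≤ ∑ j, |a j| * h * t := by
    simp only [L, List.map_ofFn, List.sum_ofFn, Finset.sum_mul, Function.comp_apply]
    gcongr with j
    simpa [norm_smul] using mul_le_mul_of_nonneg_left (hHh j) (abs_nonneg (a j))
  refine (norm_prod_exp_sub_taylor_le ContinuousLinearMap.norm_id_le L f hfL ht (ℓ + 1)).trans ?_
  gcongr
  exact div_nonneg (pow_nonneg (hc.trans hct) _) (by positivity)

/-- Lemma 6 of Childs–Wiebe: for self-adjoint operators `H j` with `‖H j‖ ≤ h`,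
reals `a j`, and `t ≥ 0`, the Taylor remainder (beyond order `ℓ`) of
`t ↦ ∏ⱼ e^{-i a_j H_j t}` at `0` has norm at most
`(∑ⱼ |a_j| h t)^{ℓ+1}/(ℓ+1)! · exp(∑ⱼ |a_j| h t)`. -/
theorem stmt_11 (N M : ℕ)
    (H : Fin M → (EuclideanSpace ℂ (Fin N) →L[ℂ] EuclideanSpace ℂ (Fin N)))
    (hH : ∀ j, IsSelfAdjoint (H j)) (h : ℝ) (hHh : ∀ j, ‖H j‖ ≤ h)
    (a : Fin M → ℝ) (t : ℝ) (ht : 0 ≤ t) (ℓ : ℕ)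
    (f : ℝ → (EuclideanSpace ℂ (Fin N) →L[ℂ] EuclideanSpace ℂ (Fin N)))
    (hf : f = fun s : ℝ =>
      (List.ofFn fun j : Fin M =>
        NormedSpace.exp ((-(Complex.I) * (a j : ℂ) * ((s : ℝ) : ℂ)) • H j)).prod) :
    ‖f t - ∑ p ∈ Finset.range (ℓ + 1), (t ^ p / (p.factorial : ℝ)) • iteratedDeriv p f 0‖
      ≤ (∑ j, |a j| * h * t) ^ (ℓ + 1) / ((ℓ + 1).factorial : ℝ) *
          Real.exp (∑ j, |a j| * h * t) :=
  stmt_11_general N M H h hHh a t ht ℓ f hf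
end
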